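/- arXiv:1608.00259 — 2 statements merged into one kernel-verified Lean document; each statement's English description precedes it below -/
import Mathlib

section
/- Let A be a finite abelian group. Then the Frattini subgroup of Dih(A) equals the image of the Frattini subgroup of A under the natural inclusion A ↪ Dih(A). -/
/-- An *intersection subgroup* of `G`: an intersection of a nonempty
collection of maximal subgroups of `G`. -/
def IsIntersectionSubgroup {G : Type*} [Group G] (I : Subgroup G) : Prop :=
  ∃ 𝒩 : Set (Subgroup G), 𝒩.Nonempty ∧ (∀ M ∈ 𝒩, IsCoatom M) ∧ I = sInf 𝒩

/-- `⌈P⌉`: the intersection of all maximal subgroups of `G` containing `P`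
(the smallest intersection subgroup containing a non-generating set `P`). -/
def interCeil {G : Type*} [Group G] (P : Set G) : Subgroup G :=
  sInf {M : Subgroup G | IsCoatom M ∧ P ⊆ (M : Set G)}

/-- The *deficiency* `δ(P)` of a subset `P ⊆ G`: the minimum size of a
finite subset `Q ⊆ G` with `⟨P ∪ Q⟩ = G`. -/
noncomputable def deficiency {G : Type*} [Group G] (P : Set G) : ℕ :=
  sInf {n : ℕ | ∃ Q : Finset G, Q.card = n ∧ Subgroup.closure (P ∪ ↑Q) = ⊤}

/-- `d(G)`: the minimum size of a generating set of `G`. -/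
noncomputable def minGen (G : Type*) [Group G] : ℕ :=
  sInf {n : ℕ | ∃ S : Finset G, S.card = n ∧ Subgroup.closure (S : Set G) = ⊤}

open Classical in
/-- The nim-number of a position `P` in the achievement game `GEN(G)`:
positions generating `G` are terminal (they have no options, so their
nim-number is `mex ∅ = 0`); the options of a non-generating position `P`
are the positions `P ∪ {g}` for `g ∈ G \ P`, and
`nim(P) = mex {nim(P ∪ {g}) | g ∈ G \ P}` is the least natural number
that is not the nim-number of an option of `P`. -/
noncomputable def gameNim {G : Type*} [Group G] [Fintype G] (P : Set G) : ℕ :=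
  if Subgroup.closure P = ⊤ then 0
  else sInf {n : ℕ | ∀ g ∉ P, n ≠ gameNim (insert g P)}
termination_by Fintype.card G - P.ncard
decreasing_by
  have h1 : (insert g P).ncard = P.ncard + 1 :=
    Set.ncard_insert_of_notMem ‹g ∉ P› (Set.toFinite P)
  have h2 : (insert g P).ncard ≤ Fintype.card G := by
    have := Set.ncard_le_ncard (Set.subset_univ (insert g P)) (Set.toFinite _)
    simpa [Set.ncard_univ, Nat.card_eq_fintype_card] using this
  omega

/-- The homomorphism `C₂ → Aut A` sending the nontrivial element of `C₂`
to the inversion automorphism `a ↦ a⁻¹` of the abelian group `A`. -/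
def dihTwist (A : Type*) [CommGroup A] : Multiplicative (ZMod 2) →* MulAut A where
  toFun k := if (Multiplicative.toAdd k) = 0 then 1 else MulEquiv.inv A
  map_one' := by simp
  map_mul' := by
    intro a b
    have hinv : (MulEquiv.inv A) * (MulEquiv.inv A) = 1 := by
      ext x
      simp
    have hcases : ∀ x : ZMod 2, x = 0 ∨ x = 1 := by decide
    have h11 : (1 : ZMod 2) + 1 = 0 := by decide
    have hab : Multiplicative.toAdd (a * b)
        = Multiplicative.toAdd a + Multiplicative.toAdd b := rfl
    rcases hcases (Multiplicative.toAdd a) with h1 | h1 <;>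
      rcases hcases (Multiplicative.toAdd b) with h2 | h2 <;>
      simp [hab, h1, h2, hinv, h11]

/-- The generalized dihedral group `Dih(A) = C₂ ⋉ A`: the semidirect product
in which the nontrivial element of `C₂` acts on the abelian group `A` by
inversion. -/
abbrev Dih (A : Type*) [CommGroup A] :=
  SemidirectProduct A (Multiplicative (ZMod 2)) (dihTwist A)

/-- The natural inclusion `A ↪ Dih(A)`, identifying `A` with a normal
subgroup of index 2 of `Dih(A)`. -/
abbrev DihInl (A : Type*) [CommGroup A] : A →* Dih A := SemidirectProduct.inl

/-- `Dih A` is in bijection with `A × C₂`. -/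
def dihEquivProd (A : Type*) [CommGroup A] : Dih A ≃ A × Multiplicative (ZMod 2) where
  toFun x := (x.left, x.right)
  invFun p := ⟨p.1, p.2⟩
  left_inv _ := rfl
  right_inv _ := rfl

instance (A : Type*) [CommGroup A] [Fintype A] : Fintype (Dih A) :=
  Fintype.ofEquiv _ (dihEquivProd A).symm


section FrattiniDihAux

lemma mem_frattini_iff' {G : Type*} [Group G] {x : G} :
    x ∈ frattini G ↔ ∀ M : Subgroup G, IsCoatom M → x ∈ M := by
  simp [frattini, Order.radical, Subgroup.mem_iInf]

variable {A : Type*} [CommGroup A]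

lemma dihTwist_mem {M : Subgroup A} {a : A} (h : a ∈ M) (k : Multiplicative (ZMod 2)) :
    dihTwist A k a ∈ M := by
  by_cases h0 : k = 1 <;> simp [dihTwist, h0, h, inv_mem]

lemma dih_conj_inl (g : Dih A) (b : A) :
    g * DihInl A b * g⁻¹ = DihInl A (dihTwist A g.right b) := by
  ext
  · simp [SemidirectProduct.mul_left, SemidirectProduct.mul_right,
      SemidirectProduct.inv_left, SemidirectProduct.inv_right, map_inv,
      mul_comm, mul_assoc, mul_left_comm]
  · simp [SemidirectProduct.mul_right, SemidirectProduct.inv_right]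

/-- The subgroup of `Dih A` of elements whose `A`-part lies in `M`. -/
def dihSub (M : Subgroup A) : Subgroup (Dih A) where
  carrier := {x | x.left ∈ M}
  one_mem' := by simp [SemidirectProduct.one_left, one_mem]
  mul_mem' := by
    intro x y hx hy
    simpa [SemidirectProduct.mul_left] using mul_mem hx (dihTwist_mem hy _)
  inv_mem' := by
    intro x hx
    show (x⁻¹).left ∈ M
    rw [SemidirectProduct.inv_left]
    exact dihTwist_mem (inv_mem hx) _

lemma mem_dihSub {M : Subgroup A} {x : Dih A} : x ∈ dihSub M ↔ x.left ∈ M := Iff.rfl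

lemma inl_mem_dihSub {M : Subgroup A} {a : A} : DihInl A a ∈ dihSub M ↔ a ∈ M := Iff.rfl

lemma inr_mem_dihSub {M : Subgroup A} (k : Multiplicative (ZMod 2)) :
    SemidirectProduct.inr k ∈ dihSub M := by
  simp [mem_dihSub, SemidirectProduct.left_inr, one_mem]

lemma isCoatom_dihSub {M : Subgroup A} (hM : IsCoatom M) : IsCoatom (dihSub M) := by
  constructor
  · intro h
    obtain ⟨a, -, ha⟩ := SetLike.exists_of_lt hM.1.lt_top
    exact ha ((inl_mem_dihSub).mp (h ▸ Subgroup.mem_top _))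
  · intro H hH
    obtain ⟨x, hxH, hxM⟩ := SetLike.exists_of_lt hH
    have hsub : dihSub M ≤ H := hH.le
    -- `inl x.left ∈ H`
    have hinr : SemidirectProduct.inr x.right ∈ H := hsub (inr_mem_dihSub _)
    have hinl : DihInl A x.left ∈ H := by
      have h1 : DihInl A x.left = x * (SemidirectProduct.inr x.right)⁻¹ := by
        ext <;>
          simp [SemidirectProduct.mul_left, SemidirectProduct.mul_right,
            SemidirectProduct.inv_left, SemidirectProduct.inv_right,
            SemidirectProduct.left_inr, SemidirectProduct.right_inr, map_inv]
      rw [h1]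
      exact mul_mem hxH (inv_mem hinr)
    -- `M ⊔ closure {x.left} = ⊤` by maximality of `M`
    have hxl : x.left ∉ M := hxM
    have hsup : M ⊔ Subgroup.closure {x.left} = ⊤ := by
      refine hM.2 _ (lt_of_le_of_ne le_sup_left ?_)
      intro h
      exact hxl (h ▸ Subgroup.mem_sup_right (Subgroup.subset_closure rfl))
    -- every `inl a` is in `H`
    have hinlA : ∀ a : A, DihInl A a ∈ H := by
      intro a
      have ha : a ∈ M ⊔ Subgroup.closure {x.left} := hsup ▸ Subgroup.mem_top a
      have : DihInl A a ∈ Subgroup.map (DihInl A) (M ⊔ Subgroup.closure {x.left}) :=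
        Subgroup.mem_map_of_mem _ ha
      rw [Subgroup.map_sup, MonoidHom.map_closure] at this
      refine sup_le (fun y hy => ?_) (Subgroup.closure_le _ |>.mpr ?_) this
      · obtain ⟨m, hm, rfl⟩ := hy
        exact hsub (inl_mem_dihSub.mpr hm)
      · rintro y ⟨m, rfl | h, rfl⟩
        exact hinl
    rw [eq_top_iff]
    intro y _
    rw [← SemidirectProduct.inl_left_mul_inr_right y]
    exact mul_mem (hinlA _) (hsub (inr_mem_dihSub _))

lemma isCoatom_ker_rightHom :
    IsCoatom (MonoidHom.ker (SemidirectProduct.rightHom : Dih A →* Multiplicative (ZMod 2))) := by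
  constructor
  · intro h
    have : (SemidirectProduct.inr (Multiplicative.ofAdd (1 : ZMod 2)) : Dih A) ∈
        MonoidHom.ker SemidirectProduct.rightHom := h ▸ Subgroup.mem_top _
    rw [MonoidHom.mem_ker, SemidirectProduct.rightHom_inr] at this
    exact absurd this (by decide)
  · intro H hH
    obtain ⟨x, hxH, hxK⟩ := SetLike.exists_of_lt hH
    rw [MonoidHom.mem_ker] at hxK
    rw [eq_top_iff]
    intro y _
    by_cases hy : SemidirectProduct.rightHom y = 1
    · exact hH.le (MonoidHom.mem_ker.mpr hy)
    · have hx1 : SemidirectProduct.rightHom x = Multiplicative.ofAdd 1 := by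
        have : ∀ k : Multiplicative (ZMod 2), k = 1 ∨ k = Multiplicative.ofAdd 1 := by decide
        rcases this (SemidirectProduct.rightHom x) with h | h
        · exact absurd h hxK
        · exact h
      have hy1 : SemidirectProduct.rightHom y = Multiplicative.ofAdd 1 := by
        have : ∀ k : Multiplicative (ZMod 2), k = 1 ∨ k = Multiplicative.ofAdd 1 := by decide
        rcases this (SemidirectProduct.rightHom y) with h | h
        · exact absurd h hy
        · exact h
      have : y * x⁻¹ ∈ MonoidHom.ker (SemidirectProduct.rightHom : Dih A →* _) := by
        rw [MonoidHom.mem_ker, map_mul, map_inv, hx1, hy1, mul_inv_cancel]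
      have := mul_mem (hH.le this) hxH
      rwa [inv_mul_cancel_right] at this

end FrattiniDihAux

/-- For a finite abelian group `A`, the Frattini subgroup of `Dih(A)` is the
image of the Frattini subgroup of `A` under the natural inclusion
`A ↪ Dih(A)`. -/
theorem frattini_dih (A : Type*) [CommGroup A] [Fintype A] :
    frattini (Dih A) = (frattini A).map (DihInl A) := by
  apply le_antisymm
  · intro x hx
    -- x lies in the kernel of rightHom, a maximal subgroup
    have hx0 : x ∈ MonoidHom.ker (SemidirectProduct.rightHom : Dih A →* _) :=
      frattini_le_coatom isCoatom_ker_rightHom hx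
    rw [MonoidHom.mem_ker, SemidirectProduct.rightHom_eq_right] at hx0
    have hxeq : x = DihInl A x.left := by
      rw [← SemidirectProduct.inl_left_mul_inr_right x, hx0]
      simp
    refine Subgroup.mem_map.mpr ⟨x.left, ?_, hxeq.symm⟩
    rw [mem_frattini_iff']
    intro M hM
    exact (mem_dihSub).mp (frattini_le_coatom (isCoatom_dihSub hM) hx)
  · intro x hx
    obtain ⟨a, ha, rfl⟩ := Subgroup.mem_map.mp hx
    rw [mem_frattini_iff']
    intro N hN
    set M : Subgroup A := N.comap (DihInl A) with hMdef
    by_cases hM : M = ⊤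
    · have : a ∈ M := hM ▸ Subgroup.mem_top a
      exact Subgroup.mem_comap.mp this
    · have hMco : IsCoatom M := by
        refine ⟨hM, fun B hB => ?_⟩
        obtain ⟨b, hbB, hbM⟩ := SetLike.exists_of_lt hB
        have hnormal : (Subgroup.map (DihInl A) B).Normal := by
          constructor
          rintro _ ⟨b', hb', rfl⟩ g
          rw [dih_conj_inl]
          exact ⟨_, dihTwist_mem hb' _, rfl⟩
        have hsup : N ⊔ Subgroup.map (DihInl A) B = ⊤ := by
          refine hN.2 _ (lt_of_le_of_ne le_sup_left ?_)
          intro h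
          exact hbM (h ▸ Subgroup.mem_sup_right (Subgroup.mem_map_of_mem _ hbB) : DihInl A b ∈ N)
        rw [eq_top_iff]
        intro c _
        have hc : DihInl A c ∈ ((N ⊔ Subgroup.map (DihInl A) B : Subgroup (Dih A)) : Set (Dih A)) :=
          hsup ▸ Subgroup.mem_top _
        rw [Subgroup.mul_normal] at hc
        obtain ⟨n, hn, m, hm, hnm⟩ := hc
        obtain ⟨b', hb', rfl⟩ := hm
        have hn' : n = DihInl A (c * b'⁻¹) := by
          rw [map_mul, map_inv]
          rw [← hnm]
          group
        have : c * b'⁻¹ ∈ M := by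
          rw [hMdef, Subgroup.mem_comap]
          rwa [hn'] at hn
        have : c * b'⁻¹ ∈ B := hB.le this
        have := mul_mem this hb'
        rwa [inv_mul_cancel_right] at this
      rw [mem_frattini_iff'] at ha
      exact Subgroup.mem_comap.mp (ha M hMco)
end

section
/- Let G = Dih(A) where A is a finite abelian group of odd order with d(A) = 2, let I be an intersection subgroup of G of odd order, and suppose δ(I) = m with m ∈ {1, 2, 3}. Then: (i) there exists g ∈ G such that δ(I ∪ {g}) = m − 1 and either I ∪ {g} generates G or the smallest intersection subgroup ⌈I ∪ {g}⌉ containing I ∪ {g} has even order; and (ii) there is no g ∈ G such that I ∪ {g} does not generate G, δ(I ∪ {g}) = m, and ⌈I ∪ {g}⌉ has even order. -/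
section DihAux

open SemidirectProduct Subgroup

variable {A : Type*} [CommGroup A]

/-- The distinguished reflection `t₀ = ⟨1, 1⟩`. -/
def dihT (A : Type*) [CommGroup A] : Dih A := ⟨1, Multiplicative.ofAdd 1⟩

lemma dihT_right (A : Type*) [CommGroup A] : (dihT A).right = Multiplicative.ofAdd 1 := rfl

lemma ofAdd_one_ne_one : (Multiplicative.ofAdd (1 : ZMod 2)) ≠ 1 := by decide

lemma zmod2_eq {y z : Multiplicative (ZMod 2)} (hy : y ≠ 1) (hz : z ≠ 1) : y = z := by
  revert hy hz; revert y z; decide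

lemma dihTwist_apply_ne (k : Multiplicative (ZMod 2)) (c : A) (h : k ≠ 1) :
    dihTwist A k c = c⁻¹ := by
  simp only [dihTwist, MonoidHom.coe_mk, OneHom.coe_mk]
  rw [if_neg (by revert h; revert k; decide : Multiplicative.toAdd k ≠ 0)]
  rfl

lemma dihTwist_mem_iff (B : Subgroup A) (k : Multiplicative (ZMod 2)) (c : A) :
    dihTwist A k c ∈ B ↔ c ∈ B := by
  by_cases h : k = 1 <;> simp [dihTwist, h]

/-- For any subgroup `B ≤ A`, the set of elements of `Dih A` whose `A`-part
lies in `B` is a subgroup. -/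
def Esub (B : Subgroup A) : Subgroup (Dih A) where
  carrier := {g | g.left ∈ B}
  one_mem' := B.one_mem
  mul_mem' := by
    intro x y hx hy
    simp only [Set.mem_setOf_eq, SemidirectProduct.mul_left] at *
    exact B.mul_mem hx ((dihTwist_mem_iff B _ _).2 hy)
  inv_mem' := by
    intro x hx
    simp only [Set.mem_setOf_eq, SemidirectProduct.inv_left] at *
    exact (dihTwist_mem_iff B _ _).2 (B.inv_mem hx)

lemma mem_Esub {B : Subgroup A} {g : Dih A} : g ∈ Esub B ↔ g.left ∈ B := Iff.rfl

lemma Esub_ne_top {B : Subgroup A} (h : B ≠ ⊤) : Esub B ≠ (⊤ : Subgroup (Dih A)) := by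
  intro htop
  refine h ((Subgroup.eq_top_iff' B).2 fun c => ?_)
  have : (inl c : Dih A) ∈ Esub B := htop.ge (Subgroup.mem_top _)
  simpa [mem_Esub] using this

lemma inl_eq_self {g : Dih A} (h : g.right = 1) : (inl g.left : Dih A) = g := by
  ext <;> simp [h]

/-- A subgroup of `Dih A` containing all "rotations" and one "reflection" is everything. -/
lemma dih_eq_top {H : Subgroup (Dih A)} (hrot : ∀ a : A, (inl a : Dih A) ∈ H)
    {r : Dih A} (hr : r ∈ H) (hr2 : r.right ≠ 1) : H = ⊤ := by
  rw [Subgroup.eq_top_iff']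
  intro g
  by_cases hg : g.right = 1
  · rw [← inl_eq_self hg]; exact hrot _
  · have hgr : (g * r⁻¹).right = 1 := by
      rw [SemidirectProduct.mul_right, SemidirectProduct.inv_right, zmod2_eq hg hr2,
        mul_inv_cancel]
    have hmem : g * r⁻¹ ∈ H := by rw [← inl_eq_self hgr]; exact hrot _
    simpa using H.mul_mem hmem hr

/-- Generation criterion: if a generating set contains a reflection and (the images of)
a generating set of `A`, it generates `Dih A`. -/
lemma dih_gen_top (T : Set A) (S : Set (Dih A)) (hsub : ∀ c ∈ T, (inl c : Dih A) ∈ S)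
    {r : Dih A} (hrS : r ∈ S) (hr : r.right ≠ 1) (hT : Subgroup.closure T = ⊤) :
    Subgroup.closure S = (⊤ : Subgroup (Dih A)) := by
  refine dih_eq_top (fun a => ?_) (Subgroup.subset_closure hrS) hr
  have hle : Subgroup.closure T ≤ Subgroup.comap (inl : A →* Dih A) (Subgroup.closure S) :=
    (Subgroup.closure_le _).2 fun c hc => Subgroup.subset_closure (hsub c hc)
  rw [hT] at hle
  exact hle (Subgroup.mem_top a)

variable {I : Subgroup (Dih A)}

lemma left_mem_comap (hker : ∀ g ∈ I, g.right = 1) {g : Dih A} (hg : g ∈ I) :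
    g.left ∈ I.comap (inl : A →* Dih A) := by
  rw [Subgroup.mem_comap, inl_eq_self (hker g hg)]; exact hg

lemma closure_le_Esub (hker : ∀ g ∈ I, g.right = 1)
    {B : Subgroup A} (hB : I.comap (inl : A →* Dih A) ≤ B) (S : Set (Dih A))
    (hS : ∀ x ∈ S, x.left ∈ B) :
    Subgroup.closure ((I : Set (Dih A)) ∪ S) ≤ Esub B := by
  rw [Subgroup.closure_le]
  rintro x (hx | hx)
  · exact hB (left_mem_comap hker hx)
  · exact hS x hx

lemma closure_union_ne_top (hker : ∀ g ∈ I, g.right = 1)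
    {B : Subgroup A} (hB : I.comap (inl : A →* Dih A) ≤ B) (hBt : B ≠ ⊤) (S : Set (Dih A))
    (hS : ∀ x ∈ S, x.left ∈ B) :
    Subgroup.closure ((I : Set (Dih A)) ∪ S) ≠ ⊤ := fun h =>
  Esub_ne_top hBt (top_unique (h ▸ closure_le_Esub hker hB S hS))

/-- A set of rotations doesn't generate. -/
lemma closure_rot_ne_top (S : Set (Dih A)) (hS : ∀ x ∈ S, x.right = 1) :
    Subgroup.closure S ≠ ⊤ := by
  intro h
  have hle : Subgroup.closure S ≤ (rightHom : Dih A →* Multiplicative (ZMod 2)).ker := by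
    rw [Subgroup.closure_le]
    intro x hx
    simp only [SetLike.mem_coe, MonoidHom.mem_ker, rightHom_eq_right]
    exact hS x hx
  rw [h, top_le_iff] at hle
  have : (dihT A) ∈ (rightHom : Dih A →* Multiplicative (ZMod 2)).ker :=
    hle ▸ Subgroup.mem_top _
  rw [MonoidHom.mem_ker, rightHom_eq_right] at this
  exact ofAdd_one_ne_one this

/- Conjugation facts. -/

lemma conj_inl (d a : A) : (inl d : Dih A) * inl a * (inl d)⁻¹ = inl a := by
  rw [← map_inv, ← map_mul, ← map_mul, mul_comm d a, mul_inv_cancel_right]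

lemma conj_refl (d : A) (g : Dih A) (hg : g.right ≠ 1) :
    (inl d : Dih A) * g * (inl d)⁻¹ = ⟨g.left * (d * d), g.right⟩ := by
  have h1 : ((inl d : Dih A) * g).left = d * g.left := by
    simp [SemidirectProduct.mul_left]
  have h2 : ((inl d : Dih A) * g).right = g.right := by
    simp [SemidirectProduct.mul_right]
  have h3 : ((inl d : Dih A))⁻¹ = inl d⁻¹ := by rw [← map_inv]
  ext
  · rw [SemidirectProduct.mul_left, h1, h2, h3, left_inl,
      dihTwist_apply_ne _ _ hg, inv_inv]
    show d * g.left * d = g.left * (d * d)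
    rw [mul_comm d g.left, mul_assoc]
  · rw [SemidirectProduct.mul_right, h2, h3, right_inl, mul_one]

lemma conj_image_coe (hker : ∀ g ∈ I, g.right = 1) (d : A) :
    (fun z => (inl d : Dih A) * z * (inl d)⁻¹) '' (I : Set (Dih A)) = (I : Set (Dih A)) := by
  have : Set.EqOn (fun z => (inl d : Dih A) * z * (inl d)⁻¹) id (I : Set (Dih A)) := by
    intro z hz
    show (inl d : Dih A) * z * (inl d)⁻¹ = z
    conv_lhs => rw [← inl_eq_self (hker z hz)]
    rw [conj_inl, inl_eq_self (hker z hz)]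
  rw [Set.image_congr this, Set.image_id]

lemma closure_conj_ne_top {G : Type*} [Group G] (c : G) (S : Set G)
    (h : Subgroup.closure ((fun x => c * x * c⁻¹) '' S) ≠ ⊤) : Subgroup.closure S ≠ ⊤ := by
  intro hS
  apply h
  have himg : (⇑((MulAut.conj c).toMonoidHom) '' S) = (fun x => c * x * c⁻¹) '' S := by
    apply Set.image_congr'
    intro x
    simp [MulAut.conj_apply]
  rw [← himg, ← MonoidHom.map_closure, hS]
  exact Subgroup.map_top_of_surjective _ (MulEquiv.surjective _)

lemma exists_sq [Fintype A] (hodd : Odd (Nat.card A)) (c : A) : ∃ d : A, d * d = c := by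
  obtain ⟨k, hk⟩ := hodd
  refine ⟨c ^ (k + 1), ?_⟩
  rw [← pow_add]
  have hc : c ^ (Nat.card A) = 1 := by rw [Nat.card_eq_fintype_card]; exact pow_card_eq_one
  calc c ^ (k + 1 + (k + 1)) = c ^ (Nat.card A) * c := by
        rw [hk]; rw [← pow_succ]; congr 1; ring
    _ = c := by rw [hc, one_mul]

end DihAux
section DefAux

open Subgroup

lemma deficiency_le {G : Type*} [Group G] (P : Set G) (Q : Finset G)
    (h : Subgroup.closure (P ∪ ↑Q) = ⊤) : deficiency P ≤ Q.card :=
  Nat.sInf_le ⟨Q, rfl, h⟩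

lemma deficiency_eq {G : Type*} [Group G] (P : Set G) (k : ℕ) (Q : Finset G)
    (hQ : Q.card = k) (h : Subgroup.closure (P ∪ ↑Q) = ⊤)
    (hmin : ∀ Q' : Finset G, Q'.card < k → Subgroup.closure (P ∪ ↑Q') ≠ ⊤) :
    deficiency P = k := by
  refine le_antisymm (hQ ▸ deficiency_le P Q h) (le_csInf ⟨k, Q, hQ, h⟩ ?_)
  rintro n ⟨Q', hc, ht⟩
  by_contra hlt
  push_neg at hlt
  exact hmin Q' (by omega) ht

lemma insert_union_eq {G : Type*} (g : G) (s t : Set G) :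
    insert g s ∪ t = s ∪ insert g t := by
  rw [Set.insert_union, Set.union_insert]

lemma even_interCeil {G : Type*} [Group G] {P : Set G} {t : G} (ht : t ∈ P)
    (ht2 : t * t = 1) (ht1 : t ≠ 1) : Even (Nat.card (interCeil P)) := by
  have htm : t ∈ interCeil P := Subgroup.mem_sInf.2 fun M hM => hM.2 ht
  have ho : orderOf t = 2 := orderOf_eq_prime (by rw [pow_two]; exact ht2) ht1
  have hdvd := Subgroup.orderOf_dvd_natCard _ htm
  rw [ho] at hdvd
  obtain ⟨k, hk⟩ := hdvd
  exact ⟨k, by omega⟩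

lemma minGen_two {B : Type*} [Group B] [Fintype B] (hd : minGen B = 2) :
    ∃ b c : B, b ≠ c ∧ Subgroup.closure ({b, c} : Set B) = ⊤ := by
  classical
  have hne : {n : ℕ | ∃ S : Finset B, S.card = n ∧ Subgroup.closure (S : Set B) = ⊤}.Nonempty :=
    ⟨(Finset.univ : Finset B).card, Finset.univ, rfl, by simp⟩
  have h2 : minGen B ∈ {n : ℕ | ∃ S : Finset B, S.card = n ∧
      Subgroup.closure (S : Set B) = ⊤} := Nat.sInf_mem hne
  rw [hd] at h2
  obtain ⟨S, hS2, hStop⟩ := h2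
  obtain ⟨b, c, hbc, rfl⟩ := Finset.card_eq_two.1 hS2
  exact ⟨b, c, hbc, by simpa using hStop⟩

end DefAux

section RegimeAux

open SemidirectProduct Subgroup

variable {A : Type*} [CommGroup A] {I : Subgroup (Dih A)}

lemma odd_right_eq_one [Fintype A] (hIodd : Odd (Nat.card I)) :
    ∀ g ∈ I, g.right = 1 := by
  intro g hg
  by_contra h
  have hsq : g * g = 1 := by
    ext
    · rw [SemidirectProduct.mul_left, dihTwist_apply_ne _ _ h, mul_inv_cancel,
        SemidirectProduct.one_left]
    · rw [SemidirectProduct.mul_right, SemidirectProduct.one_right]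
      exact (by decide : ∀ y : Multiplicative (ZMod 2), y * y = 1) _
  have hne : g ≠ 1 := fun hh => h (by rw [hh, SemidirectProduct.one_right])
  have ho : orderOf g = 2 := orderOf_eq_prime (by rw [pow_two]; exact hsq) hne
  have hdvd := Subgroup.orderOf_dvd_natCard I hg
  rw [ho] at hdvd
  obtain ⟨k, hk⟩ := hdvd
  obtain ⟨j, hj⟩ := hIodd
  omega

lemma closure_I_ne_top (hker : ∀ g ∈ I, g.right = 1) :
    Subgroup.closure (I : Set (Dih A)) ≠ ⊤ := by
  rw [Subgroup.closure_eq]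
  intro h
  have hmem : dihT A ∈ I := by rw [h]; exact Subgroup.mem_top _
  exact ofAdd_one_ne_one (dihT_right A ▸ hker _ hmem)

lemma coatom_ker : IsCoatom ((rightHom : Dih A →* Multiplicative (ZMod 2)).ker) := by
  constructor
  · intro h
    have hmem : dihT A ∈ (rightHom : Dih A →* Multiplicative (ZMod 2)).ker := by
      rw [h]; exact Subgroup.mem_top _
    rw [MonoidHom.mem_ker, rightHom_eq_right] at hmem
    exact ofAdd_one_ne_one (dihT_right A ▸ hmem)
  · intro H hH
    obtain ⟨r, hrH, hrk⟩ := SetLike.exists_of_lt hH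
    rw [MonoidHom.mem_ker, rightHom_eq_right] at hrk
    exact dih_eq_top (fun a => hH.le (MonoidHom.mem_ker.mpr (rightHom_inl a))) hrH hrk

lemma card_ker_eq [Fintype A] :
    Nat.card ((rightHom : Dih A →* Multiplicative (ZMod 2)).ker) = Nat.card A := by
  rw [← range_inl_eq_ker_rightHom]
  exact (Nat.card_congr
    (MonoidHom.ofInjective (f := (inl : A →* Dih A)) inl_injective).toEquiv).symm

lemma regime1 (hker : ∀ g ∈ I, g.right = 1)
    (h1 : I.comap (inl : A →* Dih A) = ⊤) :
    deficiency (I : Set (Dih A)) = 1 := by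
  apply deficiency_eq _ 1 {dihT A} (Finset.card_singleton _)
  · rw [Finset.coe_singleton]
    refine dih_gen_top (↑(I.comap (inl : A →* Dih A))) _
      (fun c hc => Or.inl hc) (r := dihT A) (Or.inr rfl) ofAdd_one_ne_one ?_
    rw [Subgroup.closure_eq, h1]
  · intro Q' hQ'
    rw [Nat.lt_one_iff, Finset.card_eq_zero] at hQ'
    subst hQ'
    rw [Finset.coe_empty, Set.union_empty]
    exact closure_I_ne_top hker

lemma regime2 [Fintype A] (hoddA : Odd (Nat.card A)) (hker : ∀ g ∈ I, g.right = 1)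
    (h1 : I.comap (inl : A →* Dih A) ≠ ⊤)
    {b0 : A} (hb0 : Subgroup.closure ((I.comap (inl : A →* Dih A) : Set A) ∪ {b0}) = ⊤) :
    deficiency (I : Set (Dih A)) = 2 := by
  classical
  have hne : dihT A ≠ inl b0 := fun h =>
    ofAdd_one_ne_one (by rw [← dihT_right A, h, right_inl])
  apply deficiency_eq _ 2 {dihT A, inl b0}
    (by rw [Finset.card_insert_of_notMem (by simpa using hne), Finset.card_singleton])
  · have hcoe : (↑({dihT A, inl b0} : Finset (Dih A)) : Set (Dih A)) = {dihT A, inl b0} := by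
      simp
    rw [hcoe]
    refine dih_gen_top ((I.comap (inl : A →* Dih A) : Set A) ∪ {b0}) _ ?_
      (r := dihT A) (Or.inr (Or.inl rfl)) ofAdd_one_ne_one hb0
    rintro c (hc | rfl)
    · exact Or.inl hc
    · exact Or.inr (Or.inr rfl)
  · intro Q' hQ'
    have hc01 : Q'.card = 0 ∨ Q'.card = 1 := by omega
    rcases hc01 with h | h
    · rw [Finset.card_eq_zero] at h
      subst h
      rw [Finset.coe_empty, Set.union_empty]
      exact closure_I_ne_top hker
    · obtain ⟨x, rfl⟩ := Finset.card_eq_one.1 h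
      rw [Finset.coe_singleton]
      by_cases hx : x.right = 1
      · apply closure_rot_ne_top
        rintro z (hz | rfl)
        · exact hker z hz
        · exact hx
      · obtain ⟨d, hd⟩ := exists_sq hoddA x.left⁻¹
        apply closure_conj_ne_top (inl d)
        have himg : (fun z => (inl d : Dih A) * z * (inl d)⁻¹) '' ((I : Set (Dih A)) ∪ {x})
            = (I : Set (Dih A)) ∪ {(⟨1, x.right⟩ : Dih A)} := by
          rw [Set.image_union, conj_image_coe hker, Set.image_singleton]
          congr 2
          rw [conj_refl d x hx, hd, mul_inv_cancel]
        rw [himg]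
        refine closure_union_ne_top hker le_rfl h1 _ ?_
        rintro z rfl
        exact Subgroup.one_mem _

lemma regime3_pair [Fintype A] (hoddA : Odd (Nat.card A)) (hker : ∀ g ∈ I, g.right = 1)
    (h3 : ∀ b : A, Subgroup.closure ((I.comap (inl : A →* Dih A) : Set A) ∪ {b}) ≠ ⊤)
    (x y : Dih A) (hx : x.right ≠ 1) :
    Subgroup.closure ((I : Set (Dih A)) ∪ {x, y}) ≠ ⊤ := by
  obtain ⟨d, hd⟩ := exists_sq hoddA x.left⁻¹
  apply closure_conj_ne_top (inl d)
  set y' : Dih A := (inl d : Dih A) * y * (inl d)⁻¹ with hy'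
  have himg : (fun z => (inl d : Dih A) * z * (inl d)⁻¹) '' ((I : Set (Dih A)) ∪ {x, y})
      = (I : Set (Dih A)) ∪ {(⟨1, x.right⟩ : Dih A), y'} := by
    rw [Set.image_union, conj_image_coe hker, Set.image_insert_eq, Set.image_singleton]
    congr 3
    rw [conj_refl d x hx, hd, mul_inv_cancel]
  rw [himg]
  refine closure_union_ne_top hker
    (B := Subgroup.closure ((I.comap (inl : A →* Dih A) : Set A) ∪ {y'.left}))
    (fun c hc => Subgroup.subset_closure (Or.inl hc)) (h3 y'.left) _ ?_
  rintro z (rfl | rfl)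
  · exact Subgroup.one_mem _
  · exact Subgroup.subset_closure (Or.inr rfl)

lemma regime3 [Fintype A] (hoddA : Odd (Nat.card A)) (hker : ∀ g ∈ I, g.right = 1)
    (h1 : I.comap (inl : A →* Dih A) ≠ ⊤)
    (h3 : ∀ b : A, Subgroup.closure ((I.comap (inl : A →* Dih A) : Set A) ∪ {b}) ≠ ⊤)
    {b c : A} (hbc : b ≠ c) (hgen : Subgroup.closure ({b, c} : Set A) = ⊤) :
    deficiency (I : Set (Dih A)) = 3 := by
  classical
  have hne1 : dihT A ≠ inl b := fun h =>
    ofAdd_one_ne_one (by rw [← dihT_right A, h, right_inl])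
  have hne2 : dihT A ≠ inl c := fun h =>
    ofAdd_one_ne_one (by rw [← dihT_right A, h, right_inl])
  have hne3 : (inl b : Dih A) ≠ inl c := fun h => hbc (inl_injective h)
  apply deficiency_eq _ 3 {dihT A, inl b, inl c} ?_
  · have hcoe : (↑({dihT A, inl b, inl c} : Finset (Dih A)) : Set (Dih A))
        = {dihT A, inl b, inl c} := by simp
    rw [hcoe]
    refine dih_gen_top ({b, c} : Set A) _ ?_
      (r := dihT A) (Or.inr (Or.inl rfl)) ofAdd_one_ne_one hgen
    rintro e (rfl | rfl)
    · exact Or.inr (Or.inr (Or.inl rfl))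
    · exact Or.inr (Or.inr (Or.inr rfl))
  · intro Q' hQ'
    have hc012 : Q'.card = 0 ∨ Q'.card = 1 ∨ Q'.card = 2 := by omega
    rcases hc012 with h | h | h
    · rw [Finset.card_eq_zero] at h
      subst h
      rw [Finset.coe_empty, Set.union_empty]
      exact closure_I_ne_top hker
    · obtain ⟨x, rfl⟩ := Finset.card_eq_one.1 h
      rw [Finset.coe_singleton]
      refine closure_union_ne_top hker
        (B := Subgroup.closure ((I.comap (inl : A →* Dih A) : Set A) ∪ {x.left}))
        (fun e he => Subgroup.subset_closure (Or.inl he)) (h3 x.left) _ ?_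
      rintro z rfl
      exact Subgroup.subset_closure (Or.inr rfl)
    · obtain ⟨x, y, hxy, rfl⟩ := Finset.card_eq_two.1 h
      have hcoe : (↑({x, y} : Finset (Dih A)) : Set (Dih A)) = {x, y} := by simp
      rw [hcoe]
      by_cases hx : x.right = 1
      · by_cases hy : y.right = 1
        · apply closure_rot_ne_top
          rintro z (hz | rfl | rfl)
          · exact hker z hz
          · exact hx
          · exact hy
        · rw [Set.pair_comm]
          exact regime3_pair hoddA hker h3 y x hy
      · exact regime3_pair hoddA hker h3 x y hx
  · rw [Finset.card_insert_of_notMem (by simp [hne1, hne2]),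
      Finset.card_insert_of_notMem (by simpa using hne3), Finset.card_singleton]

end RegimeAux
section MoreAux

open SemidirectProduct Subgroup

variable {A : Type*} [CommGroup A] {I : Subgroup (Dih A)}

lemma dihT_mul_self (A : Type*) [CommGroup A] : dihT A * dihT A = 1 := by
  ext
  · rw [SemidirectProduct.mul_left, SemidirectProduct.one_left]
    show (1 : A) * dihTwist A (dihT A).right 1 = 1
    rw [map_one, one_mul]
  · rw [SemidirectProduct.mul_right, SemidirectProduct.one_right, dihT_right A]
    decide

lemma dihT_ne_one (A : Type*) [CommGroup A] : dihT A ≠ 1 := fun h =>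
  ofAdd_one_ne_one (by rw [← dihT_right A, h, SemidirectProduct.one_right])

lemma rot_no_even [Fintype A] (hoddA : Odd (Nat.card A)) (hker : ∀ g ∈ I, g.right = 1)
    {g : Dih A} (hgr : g.right = 1)
    (hgeven : Even (Nat.card (interCeil (insert g (I : Set (Dih A)))))) : False := by
  have hsub : insert g (I : Set (Dih A)) ⊆
      ((rightHom : Dih A →* Multiplicative (ZMod 2)).ker : Set (Dih A)) := by
    rintro z (rfl | hz)
    · exact MonoidHom.mem_ker.mpr (by rw [rightHom_eq_right]; exact hgr)
    · exact MonoidHom.mem_ker.mpr (by rw [rightHom_eq_right]; exact hker z hz)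
  have hle : interCeil (insert g (I : Set (Dih A))) ≤
      (rightHom : Dih A →* Multiplicative (ZMod 2)).ker :=
    sInf_le ⟨coatom_ker, hsub⟩
  have hdvd := Subgroup.card_dvd_of_le hle
  rw [card_ker_eq] at hdvd
  have h2 : 2 ∣ Nat.card A := dvd_trans hgeven.two_dvd hdvd
  rw [Nat.odd_iff] at hoddA
  obtain ⟨j, hj⟩ := h2
  omega

end MoreAux
/-- Let `G = Dih(A)` with `A` a finite abelian group of odd order and
`d(A) = 2`, and let `I` be an intersection subgroup of `G` of odd order with
`δ(I) = m ∈ {1, 2, 3}`. Then (i) there exists `g ∈ G` with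
`δ(I ∪ {g}) = m - 1` such that `I ∪ {g}` generates `G` or `⌈I ∪ {g}⌉` has even
order; and (ii) there is no `g ∈ G` such that `I ∪ {g}` does not generate `G`,
`δ(I ∪ {g}) = m`, and `⌈I ∪ {g}⌉` has even order. -/
theorem dih_odd_even_options (A : Type*) [CommGroup A] [Fintype A]
    (hodd : Odd (Nat.card A)) (hd : minGen A = 2)
    (I : Subgroup (Dih A)) (hI : IsIntersectionSubgroup I)
    (hIodd : Odd (Nat.card I))
    (m : ℕ) (hm : deficiency (I : Set (Dih A)) = m) (hm123 : m = 1 ∨ m = 2 ∨ m = 3) :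
    (∃ g : Dih A, deficiency (insert g (I : Set (Dih A))) = m - 1 ∧
      (Subgroup.closure (insert g (I : Set (Dih A))) = ⊤ ∨
        Even (Nat.card (interCeil (insert g (I : Set (Dih A))))))) ∧
    ¬ ∃ g : Dih A, Subgroup.closure (insert g (I : Set (Dih A))) ≠ ⊤ ∧
        deficiency (insert g (I : Set (Dih A))) = m ∧
        Even (Nat.card (interCeil (insert g (I : Set (Dih A))))) := by
  classical
  have hker : ∀ g ∈ I, g.right = 1 := odd_right_eq_one hIodd
  obtain ⟨b, c, hbc, hgen2⟩ := minGen_two hd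
  by_cases h1 : I.comap (SemidirectProduct.inl : A →* Dih A) = ⊤
  · -- regime 1 : m = 1
    have hm1 : m = 1 := by rw [← hm, regime1 hker h1]
    subst hm1
    have htop : Subgroup.closure (insert (dihT A) (I : Set (Dih A))) = ⊤ :=
      dih_gen_top (↑(I.comap (SemidirectProduct.inl : A →* Dih A))) _
        (fun e he => Set.mem_insert_iff.2 (Or.inr he)) (r := dihT A)
        (Set.mem_insert _ _) ofAdd_one_ne_one (by rw [Subgroup.closure_eq, h1])
    constructor
    · refine ⟨dihT A, ?_, Or.inl htop⟩
      apply deficiency_eq _ 0 ∅ Finset.card_empty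
      · rw [Finset.coe_empty, Set.union_empty]; exact htop
      · intro Q' hQ'; omega
    · rintro ⟨g, hgclos, hgdef, hgeven⟩
      by_cases hgr : g.right = 1
      · exact rot_no_even hodd hker hgr hgeven
      · exact hgclos (dih_gen_top (↑(I.comap (SemidirectProduct.inl : A →* Dih A))) _
          (fun e he => Set.mem_insert_iff.2 (Or.inr he)) (r := g)
          (Set.mem_insert _ _) hgr (by rw [Subgroup.closure_eq, h1]))
  · by_cases h2 : ∃ b0 : A,
        Subgroup.closure ((I.comap (SemidirectProduct.inl : A →* Dih A) : Set A) ∪ {b0}) = ⊤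
    · -- regime 2 : m = 2
      obtain ⟨b0, hb0⟩ := h2
      have hm2 : m = 2 := by rw [← hm, regime2 hodd hker h1 hb0]
      subst hm2
      constructor
      · refine ⟨dihT A, ?_, Or.inr (even_interCeil (Set.mem_insert _ _)
          (dihT_mul_self A) (dihT_ne_one A))⟩
        show deficiency _ = 1
        apply deficiency_eq _ 1 {SemidirectProduct.inl b0} (Finset.card_singleton _)
        · rw [Finset.coe_singleton, insert_union_eq]
          refine dih_gen_top ((I.comap (SemidirectProduct.inl : A →* Dih A) : Set A) ∪ {b0}) _ ?_
            (r := dihT A) (Or.inr (Or.inl rfl)) ofAdd_one_ne_one hb0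
          rintro e (he | rfl)
          · exact Or.inl he
          · exact Or.inr (Or.inr rfl)
        · intro Q' hQ'
          rw [Nat.lt_one_iff, Finset.card_eq_zero] at hQ'
          subst hQ'
          rw [Finset.coe_empty, Set.union_empty, Set.insert_eq, Set.union_comm]
          refine closure_union_ne_top hker le_rfl h1 _ ?_
          rintro z rfl
          exact Subgroup.one_mem _
      · rintro ⟨g, hgclos, hgdef, hgeven⟩
        by_cases hgr : g.right = 1
        · exact rot_no_even hodd hker hgr hgeven
        · have hle : deficiency (insert g (I : Set (Dih A))) ≤ 1 := by
            have := deficiency_le (insert g (I : Set (Dih A))) {SemidirectProduct.inl b0} ?_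
            · simpa using this
            · rw [Finset.coe_singleton, insert_union_eq]
              refine dih_gen_top ((I.comap (SemidirectProduct.inl : A →* Dih A) : Set A) ∪ {b0}) _ ?_
                (r := g) (Or.inr (Or.inl rfl)) hgr hb0
              rintro e (he | rfl)
              · exact Or.inl he
              · exact Or.inr (Or.inr rfl)
          omega
    · -- regime 3 : m = 3
      push_neg at h2
      have hm3 : m = 3 := by rw [← hm, regime3 hodd hker h1 h2 hbc hgen2]
      subst hm3
      have hnebc : (SemidirectProduct.inl b : Dih A) ≠ SemidirectProduct.inl c := fun h => hbc (SemidirectProduct.inl_injective h)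
      have hcoe : (↑({SemidirectProduct.inl b, SemidirectProduct.inl c} : Finset (Dih A)) : Set (Dih A)) = {SemidirectProduct.inl b, SemidirectProduct.inl c} := by
        simp
      have hQtop : ∀ g : Dih A, g.right ≠ 1 →
          Subgroup.closure (insert g (I : Set (Dih A)) ∪ ↑({SemidirectProduct.inl b, SemidirectProduct.inl c} : Finset (Dih A)))
            = ⊤ := by
        intro g hgr
        rw [hcoe, insert_union_eq]
        refine dih_gen_top ({b, c} : Set A) _ ?_ (r := g) (Or.inr (Or.inl rfl)) hgr hgen2
        rintro e (rfl | rfl)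
        · exact Or.inr (Or.inr (Or.inl rfl))
        · exact Or.inr (Or.inr (Or.inr rfl))
      have hcard2 : ({SemidirectProduct.inl b, SemidirectProduct.inl c} : Finset (Dih A)).card = 2 := by
        rw [Finset.card_insert_of_notMem (by simpa using hnebc), Finset.card_singleton]
      constructor
      · refine ⟨dihT A, ?_, Or.inr (even_interCeil (Set.mem_insert _ _)
          (dihT_mul_self A) (dihT_ne_one A))⟩
        show deficiency _ = 2
        apply deficiency_eq _ 2 {SemidirectProduct.inl b, SemidirectProduct.inl c} hcard2
          (hQtop (dihT A) ofAdd_one_ne_one)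
        intro Q' hQ'
        have hc01 : Q'.card = 0 ∨ Q'.card = 1 := by omega
        rcases hc01 with h | h
        · rw [Finset.card_eq_zero] at h
          subst h
          rw [Finset.coe_empty, Set.union_empty, Set.insert_eq, Set.union_comm]
          refine closure_union_ne_top hker le_rfl h1 _ ?_
          rintro z rfl
          exact Subgroup.one_mem _
        · obtain ⟨x, rfl⟩ := Finset.card_eq_one.1 h
          rw [Finset.coe_singleton, insert_union_eq]
          refine closure_union_ne_top hker
            (B := Subgroup.closure ((I.comap (SemidirectProduct.inl : A →* Dih A) : Set A) ∪ {x.left}))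
            (fun e he => Subgroup.subset_closure (Or.inl he)) (h2 x.left) _ ?_
          rintro z (rfl | rfl)
          · exact Subgroup.one_mem _
          · exact Subgroup.subset_closure (Or.inr rfl)
      · rintro ⟨g, hgclos, hgdef, hgeven⟩
        by_cases hgr : g.right = 1
        · exact rot_no_even hodd hker hgr hgeven
        · have hle : deficiency (insert g (I : Set (Dih A))) ≤ 2 := by
            have := deficiency_le (insert g (I : Set (Dih A))) {SemidirectProduct.inl b, SemidirectProduct.inl c}
              (hQtop g hgr)
            rwa [hcard2] at this
          omega
end
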